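/- arXiv:2506.12197 — 2 statements merged into one kernel-verified Lean document; each statement's English description precedes it below -/
import Mathlib

section
/- Let E be a real inner product space, f : E → ℝ a differentiable function whose gradient g : E → E (so that g(x) is the gradient of f at x for every x) is Lipschitz continuous with constant θ > 0. Let w, d ∈ E, ε > 0, and suppose ‖d − g(w)‖ ≤ ‖g(w)‖ − ε. Then for any step size η with 0 < η ≤ 1/θ, the update w⁺ = w − η·d satisfies f(w⁺) ≤ f(w) − (η/2)·(‖g(w)‖² − ‖d − g(w)‖²) ≤ f(w) − (η/2)·ε². (This is the deterministic single-step guarantee of Lemma 4: gradient steps computed from the sampled graph decrease the loss on the manifold as long as the graph gradient approximates the manifold gradient to within ‖g(w)‖ − ε.) -/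
/-!
The Lipschitz bound on the gradient makes `t ↦ f (x + t • v) - t ⟪g x, v⟫ - K/2 t² ‖v‖²`
antitone on `[0, 1]`, which is the descent lemma `f (x + v) ≤ f x + ⟪g x, v⟫ + K/2 ‖v‖²`.
For `v = -η d` and `K η ≤ 1` the right-hand side is at most `f x - η ⟪g x, d⟫ + η/2 ‖d‖²`,
and by polarization this equals `f x - η/2 (‖g x‖² - ‖d - g x‖²)`. Finally
`‖d - g x‖ ≤ ‖g x‖ - ε` makes the bracket at least `ε²`.
-/

open InnerProductSpace NNReal

section

variable {E : Type*} [NormedAddCommGroup E]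

theorem le_add_fderiv_add_of_lipschitzWith_fderiv [NormedSpace ℝ E] {f : E → ℝ}
    {f' : E → E →L[ℝ] ℝ} {K : ℝ≥0} (hf : ∀ x, HasFDerivAt f (f' x) x)
    (hf' : LipschitzWith K f') (x v : E) :
    f (x + v) ≤ f x + f' x v + K / 2 * ‖v‖ ^ 2 := by
  set φ : ℝ → ℝ := fun t => f (x + t • v) - t * f' x v - K / 2 * t ^ 2 * ‖v‖ ^ 2
  have hφ : ∀ t, HasDerivAt φ (f' (x + t • v) v - f' x v - K * t * ‖v‖ ^ 2) t := by
    intro t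
    have hline : HasDerivAt (fun s : ℝ => x + s • v) v t := by
      simpa using ((hasDerivAt_id t).smul_const v).const_add x
    refine ((((hf _).comp_hasDerivAt t hline).sub ((hasDerivAt_id t).mul_const (f' x v))).sub
      (((hasDerivAt_pow 2 t).const_mul ((K : ℝ) / 2)).mul_const (‖v‖ ^ 2))).congr_deriv ?_
    simp only [one_mul, Nat.cast_ofNat, pow_one, Nat.add_one_sub_one]
    ring
  have hφ'_nonpos : ∀ t, 0 ≤ t → f' (x + t • v) v - f' x v - K * t * ‖v‖ ^ 2 ≤ 0 := by
    intro t ht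
    have hdiff : f' (x + t • v) v - f' x v ≤ K * t * ‖v‖ ^ 2 :=
      calc f' (x + t • v) v - f' x v = (f' (x + t • v) - f' x) v := rfl
        _ ≤ ‖f' (x + t • v) - f' x‖ * ‖v‖ := (le_abs_self _).trans ((f' _ - f' _).le_opNorm v)
        _ ≤ K * ‖t • v‖ * ‖v‖ := by
          gcongr
          simpa using hf'.norm_sub_le (x + t • v) x
        _ = K * t * ‖v‖ ^ 2 := by rw [norm_smul, Real.norm_of_nonneg ht]; ring
    linarith
  have hanti : AntitoneOn φ (Set.Icc 0 1) :=
    antitoneOn_of_hasDerivWithinAt_nonpos (convex_Icc 0 1)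
      (HasDerivAt.continuousOn fun t _ => hφ t) (fun t _ => (hφ t).hasDerivWithinAt)
      fun t ht => hφ'_nonpos t (interior_subset ht).1
  have h10 := hanti (Set.left_mem_Icc.2 zero_le_one) (Set.right_mem_Icc.2 zero_le_one) zero_le_one
  simp only [φ, one_smul, zero_smul, add_zero, one_pow, one_mul, zero_mul, sub_zero,
    ne_eq, OfNat.ofNat_ne_zero, not_false_eq_true, zero_pow, mul_zero] at h10
  linarith

variable [InnerProductSpace ℝ E] [CompleteSpace E] {f : E → ℝ} {g : E → E} {K : ℝ≥0}

theorem le_add_inner_of_lipschitzWith_gradient (hf : ∀ x, HasGradientAt f (g x) x)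
    (hg : LipschitzWith K g) (x v : E) :
    f (x + v) ≤ f x + ⟪g x, v⟫_ℝ + K / 2 * ‖v‖ ^ 2 := by
  have hdual : LipschitzWith K (fun x => toDual ℝ E (g x)) := by
    have := (toDual ℝ E).lipschitz.comp hg
    rwa [one_mul] at this
  simpa using le_add_fderiv_add_of_lipschitzWith_fderiv (fun x => (hf x).hasFDerivAt) hdual x v

theorem apply_sub_smul_le_of_lipschitzWith_gradient (hf : ∀ x, HasGradientAt f (g x) x)
    (hg : LipschitzWith K g) {η : ℝ} (hη : 0 ≤ η) (hKη : K * η ≤ 1) (x d : E) :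
    f (x - η • d) ≤ f x - η / 2 * (‖g x‖ ^ 2 - ‖d - g x‖ ^ 2) := by
  have hdesc := le_add_inner_of_lipschitzWith_gradient hf hg x (-(η • d))
  rw [← sub_eq_add_neg, inner_neg_right, real_inner_smul_right, norm_neg, norm_smul,
    Real.norm_of_nonneg hη] at hdesc
  have hquad : K / 2 * (η * ‖d‖) ^ 2 ≤ η / 2 * ‖d‖ ^ 2 := by
    have : (K * η) * (η * ‖d‖ ^ 2) ≤ η * ‖d‖ ^ 2 :=
      mul_le_of_le_one_left (by positivity) hKη
    linarith
  rw [norm_sub_sq_real, real_inner_comm]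
  linarith

end

theorem stmt_11_general {E : Type*} [NormedAddCommGroup E] [InnerProductSpace ℝ E]
    [CompleteSpace E] (f : E → ℝ) (g : E → E) (θ : ℝ)
    (hgrad : ∀ x, HasGradientAt f (g x) x)
    (hLip : LipschitzWith θ.toNNReal g)
    (w d : E) (ε : ℝ) (hε : 0 < ε)
    (happrox : ‖d - g w‖ ≤ ‖g w‖ - ε)
    (η : ℝ) (hη : 0 < η) (hηθ : η ≤ 1 / θ) :
    f (w - η • d) ≤ f w - η / 2 * (‖g w‖ ^ 2 - ‖d - g w‖ ^ 2) ∧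
      f w - η / 2 * (‖g w‖ ^ 2 - ‖d - g w‖ ^ 2) ≤ f w - η / 2 * ε ^ 2 := by
  have hθ : 0 < θ := one_div_pos.mp (hη.trans_le hηθ)
  have hθη : (θ.toNNReal : ℝ) * η ≤ 1 := by
    rw [Real.coe_toNNReal θ hθ.le, mul_comm]
    exact (le_div_iff₀ hθ).mp hηθ
  have hgap : ε ^ 2 ≤ ‖g w‖ ^ 2 - ‖d - g w‖ ^ 2 := by
    nlinarith [norm_nonneg (d - g w)]
  refine ⟨apply_sub_smul_le_of_lipschitzWith_gradient hgrad hLip hη.le hθη w d, ?_⟩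
  gcongr

/-- Deterministic single-step guarantee of Lemma 4: graph-computed gradient
steps decrease the manifold loss as long as the surrogate gradient d
approximates the true gradient g(w) to within ‖g(w)‖ − ε. -/
theorem stmt_11 {E : Type*} [NormedAddCommGroup E] [InnerProductSpace ℝ E]
    [CompleteSpace E] (f : E → ℝ) (g : E → E) (θ : ℝ) (hθ : 0 < θ)
    (hgrad : ∀ x, HasGradientAt f (g x) x)
    (hLip : LipschitzWith θ.toNNReal g)
    (w d : E) (ε : ℝ) (hε : 0 < ε)
    (happrox : ‖d - g w‖ ≤ ‖g w‖ - ε)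
    (η : ℝ) (hη : 0 < η) (hηθ : η ≤ 1 / θ) :
    f (w - η • d) ≤ f w - η / 2 * (‖g w‖ ^ 2 - ‖d - g w‖ ^ 2) ∧
      f w - η / 2 * (‖g w‖ ^ 2 - ‖d - g w‖ ^ 2) ≤ f w - η / 2 * ε ^ 2 :=
  stmt_11_general f g θ hgrad hLip w d ε hε happrox η hη hηθ
end

section
/- Let E be a real inner product space, f : E → ℝ a differentiable function with f(x) ≥ 0 for all x, whose gradient g : E → E (so that g(x) is the gradient of f at x for every x) is Lipschitz continuous with constant θ > 0. Fix ε > 0 and a step size η with 0 < η ≤ 1/θ. Let w : ℕ → E be iterates satisfying w_{k+1} = w_k − η·d_k for some directions d_k ∈ E, and let K be a natural number such that ‖d_k − g(w_k)‖ ≤ ‖g(w_k)‖ − ε for every k < K. Then (K : ℝ) ≤ 2·f(w_0)/(η·ε²). (This is the deterministic form of Theorem 3: if at each step the gradient computed on the sampled graph approximates the manifold gradient to within ‖g(w_k)‖ − ε, then after at most O(1/ε²) iterations the procedure must stop, i.e., reach a point where the gradient condition fails, which happens only within an ε-neighborhood of a stationary point of the manifold risk.) -/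
/-!
By the descent lemma, a step `x ↦ x - η • d` with `θ η ≤ 1` lowers `f` by at least
`η (⟪g x, d⟫ - ‖d‖² / 2)`, and the approximation condition `‖d - g x‖ ≤ ‖g x‖ - ε` forces
`2 ⟪g x, d⟫ - ‖d‖² ≥ ε²`. Each of the `K` steps therefore lowers `f` by `η ε² / 2`, which,
as `f ≥ 0`, can happen at most `2 f (w 0) / (η ε²)` times.
-/

theorem inner_sub_le_mul_norm_sq_of_lipschitzWith {E : Type*} [NormedAddCommGroup E]
    [InnerProductSpace ℝ E] {g : E → E} {θ : ℝ} (hθ : 0 ≤ θ)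
    (hLip : LipschitzWith θ.toNNReal g) (x v : E) {t : ℝ} (ht : 0 ≤ t) :
    inner ℝ (g (x + t • v) - g x) v ≤ θ * t * ‖v‖ ^ 2 :=
  calc inner ℝ (g (x + t • v) - g x) v ≤ ‖g (x + t • v) - g x‖ * ‖v‖ := real_inner_le_norm _ _
    _ ≤ θ * ‖t • v‖ * ‖v‖ := by
        gcongr
        simpa [Real.coe_toNNReal θ hθ, ← dist_eq_norm] using hLip.dist_le_mul (x + t • v) x
    _ = θ * t * ‖v‖ ^ 2 := by rw [norm_smul, Real.norm_of_nonneg ht]; ring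

theorem sq_le_two_mul_inner_sub_norm_sq_of_norm_sub_le {E : Type*} [NormedAddCommGroup E]
    [InnerProductSpace ℝ E] {G d : E} {ε : ℝ} (hε : 0 ≤ ε) (h : ‖d - G‖ ≤ ‖G‖ - ε) :
    ε ^ 2 ≤ 2 * inner ℝ G d - ‖d‖ ^ 2 := by
  have hsq : ‖G - d‖ ^ 2 ≤ (‖G‖ - ε) ^ 2 := by
    rw [norm_sub_rev]; exact pow_le_pow_left₀ (norm_nonneg _) h 2
  rw [norm_sub_sq_real] at hsq
  nlinarith [norm_nonneg (d - G)]

section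

variable {E : Type*} [NormedAddCommGroup E] [InnerProductSpace ℝ E] [CompleteSpace E]

theorem le_add_inner_add_of_lipschitzWith_gradient {f : E → ℝ} {g : E → E} {θ : ℝ} (hθ : 0 ≤ θ)
    (hgrad : ∀ x, HasGradientAt f (g x) x) (hLip : LipschitzWith θ.toNNReal g) (x v : E) :
    f (x + v) ≤ f x + inner ℝ (g x) v + θ / 2 * ‖v‖ ^ 2 := by
  have hline : ∀ t : ℝ, HasDerivAt (fun t : ℝ => f (x + t • v)) (inner ℝ (g (x + t • v)) v) t :=
    fun t => (hgrad _).hasFDerivAt.comp_hasDerivAt t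
      (((hasDerivAt_id t).smul_const v).const_add x |>.congr_deriv (one_smul ℝ v))
  have hbound : ∀ t : ℝ,
      HasDerivAt (fun t : ℝ => f x + t * inner ℝ (g x) v + θ / 2 * t ^ 2 * ‖v‖ ^ 2)
        (inner ℝ (g x) v + θ * t * ‖v‖ ^ 2) t := by
    intro t
    refine ((((hasDerivAt_id t).mul_const (inner ℝ (g x) v)).const_add (f x)).add
      ((((hasDerivAt_id t).pow 2).const_mul (θ / 2)).mul_const (‖v‖ ^ 2))).congr_deriv ?_
    simp only [id, Nat.cast_ofNat]; ring
  have hcompare := image_le_of_deriv_right_le_deriv_boundary (a := 0) (b := 1)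
    (fun t _ => (hline t).continuousAt.continuousWithinAt) (fun t _ => (hline t).hasDerivWithinAt)
    (by simp) (fun t _ => (hbound t).continuousAt.continuousWithinAt)
    (fun t _ => (hbound t).hasDerivWithinAt)
    (fun t ht => by
      have hslope := inner_sub_le_mul_norm_sq_of_lipschitzWith hθ hLip x v ht.1
      rw [inner_sub_left] at hslope
      linarith) (Set.right_mem_Icc.2 zero_le_one)
  simpa using hcompare

theorem le_sub_of_norm_sub_gradient_le {f : E → ℝ} {g : E → E} {θ η ε : ℝ} (hθ : 0 ≤ θ)
    (hgrad : ∀ x, HasGradientAt f (g x) x) (hLip : LipschitzWith θ.toNNReal g)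
    (hη : 0 ≤ η) (hθη : θ * η ≤ 1) (hε : 0 ≤ ε) {x d : E} (hd : ‖d - g x‖ ≤ ‖g x‖ - ε) :
    f (x - η • d) ≤ f x - η * ε ^ 2 / 2 := by
  have hdescent := le_add_inner_add_of_lipschitzWith_gradient hθ hgrad hLip x (-(η • d))
  rw [← sub_eq_add_neg, inner_neg_right, real_inner_smul_right, norm_neg, norm_smul,
    Real.norm_of_nonneg hη] at hdescent
  have hgap := sq_le_two_mul_inner_sub_norm_sq_of_norm_sub_le hε hd
  have hquad : θ * η * (η * ‖d‖ ^ 2) ≤ η * ‖d‖ ^ 2 :=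
    mul_le_of_le_one_left (by positivity) hθη
  nlinarith

end

theorem le_sub_nsmul_of_forall_lt_le_sub {α : Type*} [AddCommGroup α] [PartialOrder α]
    [IsOrderedAddMonoid α] {u : ℕ → α} {c : α} {K : ℕ} (h : ∀ k < K, u (k + 1) ≤ u k - c) :
    u K ≤ u 0 - K • c := by
  induction K with
  | zero => simp
  | succ n ih =>
    calc u (n + 1) ≤ u n - c := h n n.lt_succ_self
      _ ≤ u 0 - n • c - c := sub_le_sub_right (ih fun k hk => h k (hk.trans n.lt_succ_self)) c
      _ = u 0 - (n + 1) • c := by rw [succ_nsmul, sub_add_eq_sub_sub]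

/-- Deterministic form of Theorem 3: if at each of K steps the graph-computed
direction d_k approximates the manifold gradient g(w_k) to within
‖g(w_k)‖ − ε, then K ≤ 2 f(w 0)/(η ε²), i.e., the procedure stops after
O(1/ε²) iterations. -/
theorem stmt_13 {E : Type*} [NormedAddCommGroup E] [InnerProductSpace ℝ E]
    [CompleteSpace E] (f : E → ℝ) (hf : ∀ x, 0 ≤ f x)
    (g : E → E) (θ : ℝ) (hθ : 0 < θ)
    (hgrad : ∀ x, HasGradientAt f (g x) x)
    (hLip : LipschitzWith θ.toNNReal g)
    (ε : ℝ) (hε : 0 < ε) (η : ℝ) (hη : 0 < η) (hηθ : η ≤ 1 / θ)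
    (w : ℕ → E) (d : ℕ → E)
    (hupd : ∀ k, w (k + 1) = w k - η • d k)
    (K : ℕ) (happrox : ∀ k < K, ‖d k - g (w k)‖ ≤ ‖g (w k)‖ - ε) :
    (K : ℝ) ≤ 2 * f (w 0) / (η * ε ^ 2) := by
  have hθη : θ * η ≤ 1 := by rwa [le_div_iff₀ hθ, mul_comm] at hηθ
  have hdecrease : ∀ k < K, f (w (k + 1)) ≤ f (w k) - η * ε ^ 2 / 2 := fun k hk => by
    rw [hupd k]
    exact le_sub_of_norm_sub_gradient_le hθ.le hgrad hLip hη.le hθη hε.le (happrox k hk)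
  have htotal := le_sub_nsmul_of_forall_lt_le_sub (u := fun k => f (w k)) hdecrease
  rw [nsmul_eq_mul] at htotal
  rw [le_div_iff₀ (by positivity)]
  linarith [hf (w K)]
end
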